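/- (Cross Wigner function, position marginal.) Assume u_0,…,u_N is an orthonormal basis of ℂ^{N+1} such that Q u_l = q_l u_l for each l ∈ {0,…,N}. Then for all n',n ∈ {0,…,N} and each l ∈ {0,…,N}: ∑_{k=0}^{N} W(n',n)_{k,l} = (u_l)_{n'} · conj((u_l)_n), where (u_l)_m denotes the m-th coordinate of u_l. -/

import Mathlib

open Matrix

/-- The Weyl-symmetrized operator `Ĝ_{a,b}(P,Q)`: `1/C(a+b,a)` times the sum over all
subsets `S` of `{1,…,a+b}` of size `a` of the ordered product `X_1 ⋯ X_{a+b}` with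
`X_i = P` if `i ∈ S` and `X_i = Q` otherwise. -/
noncomputable def weylG {N : ℕ} (P Q : Matrix (Fin (N + 1)) (Fin (N + 1)) ℂ) (a b : ℕ) :
    Matrix (Fin (N + 1)) (Fin (N + 1)) ℂ :=
  (((a + b).choose a : ℂ))⁻¹ •
    ∑ S ∈ Finset.univ.filter (fun S : Finset (Fin (a + b)) => S.card = a),
      (List.ofFn fun i : Fin (a + b) => if i ∈ S then P else Q).prod

/-- The matrix `Z(n',n)` with entries `Z(n',n)_{a,b} = (Ĝ_{a,b}(P,Q))_{n',n}`. -/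
noncomputable def zMatCross {N : ℕ} (P Q : Matrix (Fin (N + 1)) (Fin (N + 1)) ℂ)
    (n' n : Fin (N + 1)) : Matrix (Fin (N + 1)) (Fin (N + 1)) ℂ :=
  Matrix.of fun a b : Fin (N + 1) => weylG P Q a.val b.val n' n

/-- The cross Wigner matrix `W(n',n) = V(p)⁻ᵀ ⬝ Z(n',n) ⬝ V(q)⁻¹`, where `V(x)` is the
Vandermonde matrix on the spectrum `x` (regarded as a complex matrix). -/
noncomputable def wignerCross {N : ℕ} (P Q : Matrix (Fin (N + 1)) (Fin (N + 1)) ℂ)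
    (p q : Fin (N + 1) → ℝ) (n' n : Fin (N + 1)) : Matrix (Fin (N + 1)) (Fin (N + 1)) ℂ :=
  ((Matrix.vandermonde fun k => (p k : ℂ))ᵀ)⁻¹ * zMatCross P Q n' n *
    (Matrix.vandermonde fun l => (q l : ℂ))⁻¹

/-! The first column of a Vandermonde matrix is the all-ones vector, so the column sums of
`V(p)⁻ᵀ` select the row `a = 0` of `Z(n',n)`. Since `Ĝ_{0,b} = Qᵇ`, the spectral decomposition
of `Q` writes this row as `cᵀ V(q)` with `c_m = (u_m)_{n'} conj((u_m)_n)`, and `V(q)⁻¹` then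
returns `c`. -/

namespace Matrix

section Vandermonde

variable {R : Type*} [CommRing R] {n : ℕ}

theorem vandermonde_mulVec_single_zero (v : Fin (n + 1) → R) :
    vandermonde v *ᵥ Pi.single 0 1 = fun _ => 1 := by
  ext i
  simp [vandermonde_apply]

variable {K : Type*} [Field K]

theorem isUnit_det_vandermonde {v : Fin n → K} (hv : Function.Injective v) :
    IsUnit (vandermonde v).det :=
  isUnit_iff_ne_zero.mpr (det_vandermonde_ne_zero_iff.mpr hv)

theorem ones_vecMul_transpose_inv_vandermonde {v : Fin (n + 1) → K}
    (hv : Function.Injective v) :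
    (fun _ => 1) ᵥ* ((vandermonde v)ᵀ)⁻¹ = Pi.single 0 1 := by
  rw [← transpose_nonsing_inv, vecMul_transpose, ← vandermonde_mulVec_single_zero,
    mulVec_mulVec, nonsing_inv_mul _ (isUnit_det_vandermonde hv), one_mulVec]

end Vandermonde

section Orthonormal

variable {R ι : Type*} [CommRing R] [Fintype ι] [DecidableEq ι]

theorem pow_mulVec_of_mulVec_eq_smul {A : Matrix ι ι R} {x : ι → R} {c : R}
    (h : A *ᵥ x = c • x) (b : ℕ) : (A ^ b) *ᵥ x = c ^ b • x := by
  induction b with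
  | zero => simp
  | succ b ih => rw [pow_succ, ← mulVec_mulVec, h, mulVec_smul, ih, smul_smul, pow_succ']

variable [StarRing R]

theorem apply_eq_sum_mulVec_mul_star_of_orthonormal (A : Matrix ι ι R) (u : ι → ι → R)
    (hortho : ∀ l l', star (u l) ⬝ᵥ u l' = if l = l' then 1 else 0) (i j : ι) :
    A i j = ∑ m, (A *ᵥ u m) i * star (u m j) := by
  set U : Matrix ι ι R := of fun i l => u l i
  have hU : U * Uᴴ = 1 := mul_eq_one_comm.mp <| by
    ext l l'
    simpa [U, mul_apply, dotProduct, one_apply] using hortho l l'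
  calc A i j = (A * U * Uᴴ) i j := by rw [Matrix.mul_assoc, hU, Matrix.mul_one]
    _ = ∑ m, (A *ᵥ u m) i * star (u m j) := by
      simp [U, mul_apply, mulVec, dotProduct]

theorem pow_apply_eq_sum_of_orthonormal_eigenvectors {A : Matrix ι ι R} {u : ι → ι → R}
    {c : ι → R} (hortho : ∀ l l', star (u l) ⬝ᵥ u l' = if l = l' then 1 else 0)
    (heig : ∀ l, A *ᵥ u l = c l • u l) (b : ℕ) (i j : ι) :
    (A ^ b) i j = ∑ m, u m i * star (u m j) * c m ^ b := by
  rw [apply_eq_sum_mulVec_mul_star_of_orthonormal (A ^ b) u hortho]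
  refine Finset.sum_congr rfl fun m _ => ?_
  rw [pow_mulVec_of_mulVec_eq_smul (heig m), Pi.smul_apply, smul_eq_mul]
  ring

end Orthonormal

end Matrix

open Matrix

theorem weylG_zero_left {N : ℕ} (P Q : Matrix (Fin (N + 1)) (Fin (N + 1)) ℂ) (b : ℕ) :
    weylG P Q 0 b = Q ^ b := by
  have hempty : Finset.univ.filter (fun S : Finset (Fin (0 + b)) => S.card = 0) = {∅} := by
    ext S; simp [Finset.card_eq_zero]
  rw [weylG, hempty, Finset.sum_singleton]
  simp [List.ofFn_const, List.prod_replicate]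

/-- Cross Wigner function, position marginal: if `u₀,…,u_N` is an orthonormal basis of
`ℂ^{N+1}` of eigenvectors of `Q` with `Q uₗ = qₗ uₗ`, then
`∑ₖ W(n',n)_{k,l} = (uₗ)_{n'} ⬝ conj((uₗ)ₙ)`. -/
theorem wignerCross_position_marginal {N : ℕ}
    (P Q : Matrix (Fin (N + 1)) (Fin (N + 1)) ℂ)
    (p q : Fin (N + 1) → ℝ) (hp : Function.Injective p) (hq : Function.Injective q)
    (u : Fin (N + 1) → (Fin (N + 1) → ℂ))
    (hortho : ∀ l l' : Fin (N + 1),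
      (star (u l)) ⬝ᵥ (u l') = if l = l' then 1 else 0)
    (heig : ∀ l : Fin (N + 1), Q.mulVec (u l) = (q l : ℂ) • u l)
    (n' n : Fin (N + 1)) :
    ∀ l : Fin (N + 1),
      ∑ k : Fin (N + 1), wignerCross P Q p q n' n k l =
        u l n' * (starRingEnd ℂ) (u l n) := by
  intro l
  set Vq := vandermonde fun l => (q l : ℂ)
  set c : Fin (N + 1) → ℂ := fun m => u m n' * star (u m n)
  have hp' : Function.Injective fun k => (p k : ℂ) := Complex.ofReal_injective.comp hp
  have hq' : Function.Injective fun k => (q k : ℂ) := Complex.ofReal_injective.comp hq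
  have hrow : (zMatCross P Q n' n).row 0 = c ᵥ* Vq := by
    ext b
    simp [zMatCross, weylG_zero_left, pow_apply_eq_sum_of_orthonormal_eigenvectors hortho heig,
      vecMul, dotProduct, Vq, c, vandermonde_apply]
  calc ∑ k, wignerCross P Q p q n' n k l
      = ((fun _ => 1) ᵥ* wignerCross P Q p q n' n) l := by simp [vecMul, dotProduct]
    _ = (c ᵥ* (Vq * Vq⁻¹)) l := by
      rw [wignerCross, ← vecMul_vecMul, ← vecMul_vecMul, ones_vecMul_transpose_inv_vandermonde hp',
        single_one_vecMul, hrow, vecMul_vecMul]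
    _ = c l := by
      rw [mul_nonsing_inv _ (isUnit_det_vandermonde hq'), vecMul_one]
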